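/- arXiv:math/9906125 — 4 statements merged into one kernel-verified Lean document; each statement's English description precedes it below -/
import Mathlib

section
/- Let Γ be the presented group with generators g, h, f and relations h g h⁻¹ = g⁻¹, h f h⁻¹ = f⁻¹, and g f = f g. Then every element x of Γ can be written in the form g^k · h^l · f^m for integers k, l, m, and the triple (k, l, m) is uniquely determined by x. -/
/-- The relator set of the presented group
`Γ = ⟨g, h, f | h g h⁻¹ = g⁻¹, h f h⁻¹ = f⁻¹, g f = f g⟩`,
the fundamental group of the spherical tangent bundle of the Klein bottle.
Generator `0` is `g`, generator `1` is `h`, generator `2` is `f`. -/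
def kleinSTRels : Set (FreeGroup (Fin 3)) :=
  { FreeGroup.of 1 * FreeGroup.of 0 * (FreeGroup.of 1)⁻¹ * FreeGroup.of 0,
    FreeGroup.of 1 * FreeGroup.of 2 * (FreeGroup.of 1)⁻¹ * FreeGroup.of 2,
    FreeGroup.of 0 * FreeGroup.of 2 * (FreeGroup.of 0)⁻¹ * (FreeGroup.of 2)⁻¹ }

/-- The presented group `⟨g, h, f | h g h⁻¹ = g⁻¹, h f h⁻¹ = f⁻¹, g f = f g⟩`. -/
abbrev KleinST : Type := PresentedGroup kleinSTRels

def KleinST.g : KleinST := PresentedGroup.of 0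
def KleinST.h : KleinST := PresentedGroup.of 1
def KleinST.f : KleinST := PresentedGroup.of 2

/-! Conjugation by `h ^ l` acts on `g` and on `f` as the power `(-1) ^ l`, and `g` commutes with
`f`; hence left multiplication by a power of a generator maps a word `g ^ k * h ^ l * f ^ m` to
another such word, and these words exhaust `Γ`. They are pairwise distinct because the
homomorphism `Γ → D∞ × D∞ × ℤ` given by `g ↦ (r, 1, 0)`, `h ↦ (s, s, 1)`, `f ↦ (1, r, 0)` sends
`g ^ k * h ^ l * f ^ m` to `(r ^ k * s ^ l, s ^ l * r ^ m, l)`, from which `l`, `k`, `m` are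
read off. -/

theorem zpow_mul_mul_inv_eq_zpow_negOnePow {G : Type*} [Group G] {a b : G}
    (hab : a * b * a⁻¹ = b⁻¹) (l : ℤ) : a ^ l * b * (a ^ l)⁻¹ = b ^ (l.negOnePow : ℤ) := by
  have hab' : a⁻¹ * b * a = b⁻¹ :=
    calc a⁻¹ * b * a = a⁻¹ * (a * b * a⁻¹)⁻¹ * a := by rw [hab, inv_inv]
      _ = b⁻¹ := by group
  induction l using Int.induction_on with
  | zero => simp
  | succ l ih =>
    have hconj : a ^ ((l : ℤ) + 1) * b * (a ^ ((l : ℤ) + 1))⁻¹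
        = (a ^ (l : ℤ) * (a * b * a⁻¹)⁻¹ * (a ^ (l : ℤ))⁻¹)⁻¹ := by group
    rw [hconj, hab, inv_inv, ih, Int.negOnePow_succ, Units.val_neg, zpow_neg]
  | pred l ih =>
    have hconj : a ^ (-(l : ℤ) - 1) * b * (a ^ (-(l : ℤ) - 1))⁻¹
        = (a ^ (-(l : ℤ)) * (a⁻¹ * b * a)⁻¹ * (a ^ (-(l : ℤ)))⁻¹)⁻¹ := by group
    rw [hconj, hab', inv_inv, ih, Int.negOnePow_sub, Int.negOnePow_one, mul_neg, mul_one,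
      Units.val_neg, zpow_neg]

theorem zpow_mul_zpow_of_mul_mul_inv_eq_inv {G : Type*} [Group G] {a b : G}
    (hab : a * b * a⁻¹ = b⁻¹) (l k : ℤ) : a ^ l * b ^ k = b ^ (l.negOnePow * k : ℤ) * a ^ l := by
  rw [zpow_mul, ← zpow_mul_mul_inv_eq_zpow_negOnePow hab, conj_zpow, inv_mul_cancel_right]

namespace KleinST

open DihedralGroup

theorem h_mul_g_mul_h_inv : h * g * h⁻¹ = g⁻¹ :=
  eq_inv_of_mul_eq_one_left (PresentedGroup.one_of_mem (by simp [kleinSTRels]))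

theorem h_mul_f_mul_h_inv : h * f * h⁻¹ = f⁻¹ :=
  eq_inv_of_mul_eq_one_left (PresentedGroup.one_of_mem (by simp [kleinSTRels]))

theorem commute_g_f : Commute g f :=
  commutatorElement_eq_one_iff_commute.mp (PresentedGroup.one_of_mem (by simp [kleinSTRels]))

def normalForm (t : ℤ × ℤ × ℤ) : KleinST := g ^ t.1 * h ^ t.2.1 * f ^ t.2.2

theorem g_zpow_mul_normalForm (j k l m : ℤ) :
    g ^ j * normalForm (k, l, m) = normalForm (j + k, l, m) := by
  simp only [normalForm, zpow_add, mul_assoc]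

theorem h_zpow_mul_normalForm (j k l m : ℤ) :
    h ^ j * normalForm (k, l, m) = normalForm (j.negOnePow * k, j + l, m) := by
  simp only [normalForm, ← mul_assoc,
    zpow_mul_zpow_of_mul_mul_inv_eq_inv h_mul_g_mul_h_inv j k, zpow_add]

theorem f_zpow_mul_normalForm (j k l m : ℤ) :
    f ^ j * normalForm (k, l, m) = normalForm (k, l, l.negOnePow * j + m) := by
  have hfh : f ^ j * h ^ l = h ^ l * f ^ (l.negOnePow * j : ℤ) := by
    rw [zpow_mul_zpow_of_mul_mul_inv_eq_inv h_mul_f_mul_h_inv, ← mul_assoc,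
      ← Units.val_mul, Int.units_mul_self, Units.val_one, one_mul]
  simp only [normalForm, ← mul_assoc, (commute_g_f.zpow_zpow k j).eq.symm]
  rw [mul_assoc (g ^ k), hfh, zpow_add]
  group

theorem zpow_of_mul_normalForm_mem_range (i : Fin 3) (j : ℤ) (t : ℤ × ℤ × ℤ) :
    PresentedGroup.of i ^ j * normalForm t ∈ Set.range normalForm := by
  obtain ⟨k, l, m⟩ := t
  fin_cases i
  exacts [⟨_, (g_zpow_mul_normalForm j k l m).symm⟩, ⟨_, (h_zpow_mul_normalForm j k l m).symm⟩,
    ⟨_, (f_zpow_mul_normalForm j k l m).symm⟩]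

theorem normalForm_surjective : Function.Surjective normalForm := by
  intro x
  have hx : x ∈ Subgroup.closure (Set.range (PresentedGroup.of (rels := kleinSTRels))) := by
    simp
  induction hx using Subgroup.closure_induction_left with
  | one => exact ⟨(0, 0, 0), by simp [normalForm]⟩
  | mul_left _ hi y _ hy =>
    obtain ⟨i, rfl⟩ := hi
    obtain ⟨t, rfl⟩ := hy
    simpa using zpow_of_mul_normalForm_mem_range i 1 t
  | inv_mul_cancel _ hi y _ hy =>
    obtain ⟨i, rfl⟩ := hi
    obtain ⟨t, rfl⟩ := hy
    simpa using zpow_of_mul_normalForm_mem_range i (-1) t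

def toDihedralProd : KleinST →* DihedralGroup 0 × DihedralGroup 0 × Multiplicative ℤ :=
  PresentedGroup.toGroup (f := ![(r 1, 1, 1), (sr 0, sr 0, .ofAdd 1), (1, r 1, 1)]) <| by
    simp [kleinSTRels, Prod.ext_iff, sr_mul_r, sr_mul_sr, r_mul_r]

theorem toDihedralProd_g : toDihedralProd g = (r 1, 1, 1) := PresentedGroup.toGroup.of _

theorem toDihedralProd_h : toDihedralProd h = (sr 0, sr 0, .ofAdd 1) := PresentedGroup.toGroup.of _

theorem toDihedralProd_f : toDihedralProd f = (1, r 1, 1) := PresentedGroup.toGroup.of _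

theorem toDihedralProd_normalForm (k l m : ℤ) :
    toDihedralProd (normalForm (k, l, m)) =
      (r (Int.cast k) * sr 0 ^ l, sr 0 ^ l * r (Int.cast m), .ofAdd l) := by
  simp only [normalForm, map_mul, map_zpow, toDihedralProd_g, toDihedralProd_h, toDihedralProd_f,
    Prod.pow_mk, Prod.mk_mul_mk, r_one_zpow, one_zpow, mul_one, one_mul, ← ofAdd_zsmul, zsmul_one,
    Int.cast_id]

theorem normalForm_injective : Function.Injective normalForm := by
  rintro ⟨k, l, m⟩ ⟨k', l', m'⟩ heq
  have himage := congrArg toDihedralProd heq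
  simp only [toDihedralProd_normalForm, Prod.mk.injEq, EmbeddingLike.apply_eq_iff_eq] at himage
  obtain ⟨hk, hm, rfl⟩ := himage
  obtain rfl : k = k' := Int.cast_injective (r.inj (mul_right_cancel hk))
  obtain rfl : m = m' := Int.cast_injective (r.inj (mul_left_cancel hm))
  rfl

end KleinST

/-- Every element of `Γ = ⟨g, h, f | h g h⁻¹ = g⁻¹, h f h⁻¹ = f⁻¹, g f = f g⟩` can be
written uniquely as `g ^ k * h ^ l * f ^ m` for integers `k, l, m`. -/
theorem kleinST_normal_form (x : KleinST) :
    ∃! t : ℤ × ℤ × ℤ, x = KleinST.g ^ t.1 * KleinST.h ^ t.2.1 * KleinST.f ^ t.2.2 := by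
  obtain ⟨t, rfl⟩ := KleinST.normalForm_surjective x
  exact ⟨t, rfl, fun t' ht' => KleinST.normalForm_injective ht'.symm⟩
end

section
/- Let Γ be the presented group with generators g, h, f and relations h g h⁻¹ = g⁻¹, h f h⁻¹ = f⁻¹, and g f = f g. Then the element f has infinite order in Γ (i.e., f^n = 1 implies n = 0 for every integer n). -/
/-!
`f` is detected by the infinite dihedral group `D∞ = ⟨r, s | s r s⁻¹ = r⁻¹, s² = 1⟩`:
sending `g ↦ 1`, `h ↦ s`, `f ↦ r` respects all three relations, and `r` has infinite order
in `D∞`, hence so does `f` in `Γ`.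
-/

namespace KleinST

open DihedralGroup

def dihedralImage : Fin 3 → DihedralGroup 0
  | 0 => 1
  | 1 => sr 0
  | 2 => r 1

lemma lift_dihedralImage_eq_one : ∀ w ∈ kleinSTRels, FreeGroup.lift dihedralImage w = 1 := by
  rintro w (rfl | rfl | rfl) <;>
    simp [dihedralImage, inv_sr, inv_r, sr_mul_r, sr_mul_sr, r_mul_r]

def toDihedral : KleinST →* DihedralGroup 0 :=
  PresentedGroup.toGroup lift_dihedralImage_eq_one

lemma toDihedral_f : toDihedral f = r 1 :=
  PresentedGroup.toGroup.of lift_dihedralImage_eq_one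

lemma orderOf_f : orderOf f = 0 := by
  have h := orderOf_map_dvd toDihedral f
  rwa [toDihedral_f, orderOf_r_one, zero_dvd_iff] at h

end KleinST

/-- In `Γ = ⟨g, h, f | h g h⁻¹ = g⁻¹, h f h⁻¹ = f⁻¹, g f = f g⟩` the element `f` has
infinite order: `f ^ n = 1` implies `n = 0` for every integer `n`. -/
theorem kleinST_f_infinite_order : ∀ n : ℤ, KleinST.f ^ n = 1 → n = 0 := by
  intro n hn
  simpa [KleinST.orderOf_f] using orderOf_dvd_iff_zpow_eq_one.2 hn
end

section
/- Let F be a free group on an arbitrary type of generators, and let H be a nontrivial subgroup of F that is commutative (any two elements of H commute). Then H is infinite cyclic: there exists an element x of F of infinite order such that H is the subgroup generated by x; equivalently, H is isomorphic to ℤ. -/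
/-- Every nontrivial commutative subgroup of a free group is infinite cyclic: it is
generated by a single element of infinite order. -/
theorem freeGroup_commutative_subgroup_infinite_cyclic {α : Type*}
    (H : Subgroup (FreeGroup α)) (hne : ∃ x ∈ H, x ≠ 1)
    (hcomm : ∀ x ∈ H, ∀ y ∈ H, x * y = y * x) :
    ∃ x : FreeGroup α, ¬ IsOfFinOrder x ∧ H = Subgroup.closure {x} := by
  classical
  -- Nielsen–Schreier: `H` is a free group
  haveI : IsFreeGroup H := inferInstance
  set G := IsFreeGroup.Generators H with hG
  let e : H ≃* FreeGroup G := IsFreeGroup.toFreeGroup H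
  -- commutativity transfers to `FreeGroup G`
  have hcommF : ∀ u v : FreeGroup G, u * v = v * u := by
    intro u v
    have h1 : ((e.symm u : H) : FreeGroup α) * ((e.symm v : H) : FreeGroup α)
        = ((e.symm v : H) : FreeGroup α) * ((e.symm u : H) : FreeGroup α) :=
      hcomm _ (e.symm u).2 _ (e.symm v).2
    have h2 : (e.symm u) * (e.symm v) = (e.symm v) * (e.symm u) := Subtype.ext h1
    calc u * v = e (e.symm u * e.symm v) := by simp
      _ = e (e.symm v * e.symm u) := by rw [h2]
      _ = v * u := by simp
  -- hence the generator type is a subsingleton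
  haveI : Subsingleton G := by
    constructor
    intro a b
    by_contra hab
    let σ : Equiv.Perm (Fin 3) := Equiv.swap 0 1
    let τ : Equiv.Perm (Fin 3) := Equiv.swap 1 2
    let f : FreeGroup G →* Equiv.Perm (Fin 3) :=
      FreeGroup.lift (fun c => if c = a then σ else τ)
    have hfa : f (FreeGroup.of a) = σ := by simp [f]
    have hfb : f (FreeGroup.of b) = τ := by
      simp only [f, FreeGroup.lift_apply_of]
      rw [if_neg (fun hba => hab hba.symm)]
    have := hcommF (FreeGroup.of a) (FreeGroup.of b)
    have h3 : σ * τ = τ * σ := by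
      have := congrArg f this
      simpa [map_mul, hfa, hfb] using this
    have : σ * τ ≠ τ * σ := by decide
    exact this h3
  -- `G` is nonempty since `H` is nontrivial
  obtain ⟨y, hyH, hy1⟩ := hne
  have hne' : e ⟨y, hyH⟩ ≠ 1 := by
    intro h
    have : (⟨y, hyH⟩ : H) = 1 := by
      have := congrArg e.symm h
      simpa using this
    exact hy1 (congrArg Subtype.val this)
  have hGne : Nonempty G := by
    by_contra hGe
    have : (e ⟨y, hyH⟩).toWord = [] := by
      cases h : (e ⟨y, hyH⟩).toWord with
      | nil => rfl
      | cons p l => exact absurd ⟨p.1⟩ hGe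
    exact hne' (by rwa [FreeGroup.toWord_eq_nil_iff] at this)
  obtain ⟨g⟩ := hGne
  -- `FreeGroup G` is generated by `FreeGroup.of g`
  have htop : Subgroup.closure {FreeGroup.of g} = (⊤ : Subgroup (FreeGroup G)) := by
    rw [← FreeGroup.closure_range_of G]
    apply le_antisymm
    · exact Subgroup.closure_mono (by rintro _ ⟨c, rfl⟩; exact ⟨g, rfl⟩)
    · apply Subgroup.closure_mono
      rintro _ ⟨c, rfl⟩
      simp [Subsingleton.elim c g]
  set h : H := e.symm (FreeGroup.of g) with hh
  set x : FreeGroup α := (h : FreeGroup α) with hx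
  -- every element of `H` is a power of `h`
  have hpow : ∀ z : H, ∃ n : ℤ, h ^ n = z := by
    intro z
    have : e z ∈ Subgroup.closure {FreeGroup.of g} := htop ▸ Subgroup.mem_top _
    rw [Subgroup.mem_closure_singleton] at this
    obtain ⟨n, hn⟩ := this
    refine ⟨n, ?_⟩
    have := congrArg e.symm hn
    simpa [hh, map_zpow] using this
  refine ⟨x, ?_, ?_⟩
  · -- infinite order
    intro hfin
    rw [isOfFinOrder_iff_pow_eq_one] at hfin
    obtain ⟨n, hn, hxn⟩ := hfin
    have hhn : h ^ n = 1 := Subtype.ext (by simpa [hx] using hxn)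
    have : (FreeGroup.of g) ^ n = 1 := by
      have := congrArg e hhn
      simpa [hh, map_pow] using this
    let φ : FreeGroup G →* Multiplicative ℤ :=
      FreeGroup.lift (fun _ => Multiplicative.ofAdd (1 : ℤ))
    have := congrArg φ this
    simp only [map_pow, map_one, FreeGroup.lift_apply_of, φ] at this
    have : (n : ℤ) = 0 := by
      have := congrArg Multiplicative.toAdd this
      simpa [← ofAdd_nsmul] using this
    omega
  · -- `H = closure {x}`
    apply le_antisymm
    · intro z hz
      obtain ⟨n, hn⟩ := hpow ⟨z, hz⟩
      rw [Subgroup.mem_closure_singleton]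
      exact ⟨n, by simpa [hx] using congrArg Subtype.val hn⟩
    · rw [Subgroup.closure_le]
      simp only [Set.singleton_subset_iff]
      exact h.2
end

section
/- Let F be a free group on an arbitrary type of generators, and let H be a nontrivial commutative subgroup of F. Then there exists a unique subgroup M of F such that: M is infinite cyclic, H ≤ M, and M is maximal among infinite cyclic subgroups of F (i.e., every infinite cyclic subgroup of F containing M equals M). -/
/-!
By Nielsen–Schreier every subgroup of a free group is free, and a free group with a nontrivial
central element has at most one generator, hence is infinite cyclic. So for `h ≠ 1` in `H` the
centralizer of `h` is infinite cyclic. It contains every commutative subgroup through `h`: `H`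
itself and every infinite cyclic subgroup through `h`, which makes it the unique maximal one.
-/

/-- A subgroup is infinite cyclic if it is generated by a single element of infinite
order. -/
def IsInfiniteCyclic {G : Type*} [Group G] (M : Subgroup G) : Prop :=
  ∃ x : G, ¬ IsOfFinOrder x ∧ M = Subgroup.closure {x}

open Subgroup

namespace FreeGroup

variable {β : Type*}

theorem subsingleton_of_forall_commute_of_ne_one {z : FreeGroup β} (hz : z ≠ 1)
    (hc : ∀ c, Commute (of c) z) : Subsingleton β := by
  classical
  obtain ⟨y, w, hw⟩ := List.exists_cons_of_ne_nil (mt toWord_eq_nil_iff.mp hz)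
  suffices ∀ c, c = y.1 from ⟨fun a b => (this a).trans (this b).symm⟩
  intro c
  by_contra hcy
  -- `c z` is reduced as written, while `z c` is a sublist of `z ++ [c]`; equal lengths force
  -- `c :: z = z ++ [c]`, so `c` would be the first letter `y` of `z`.
  have hleft : (of c * z).toWord = (c, true) :: z.toWord := by
    rw [toWord_mul, toWord_of, List.singleton_append, IsReduced.reduce_eq]
    rw [hw, isReduced_cons_cons, ← hw]
    exact ⟨fun h => absurd h hcy, isReduced_toWord⟩
  have hright : (z * of c).toWord.Sublist (z.toWord ++ [(c, true)]) := by
    simpa only [toWord_of] using toWord_mul_sublist z (of c)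
  have hswap : (c, true) :: z.toWord = z.toWord ++ [(c, true)] := by
    rw [← hleft, (hc c).eq]
    exact hright.eq_of_length (by rw [← (hc c).eq, hleft]; simp)
  rw [hw] at hswap
  exact hcy (congrArg Prod.fst (List.cons.inj hswap).1)

theorem isCyclic_of_subsingleton [Subsingleton β] : IsCyclic (FreeGroup β) := by
  cases isEmpty_or_nonempty β with
  | inl => infer_instance
  | inr h =>
    have := uniqueOfSubsingleton h.some
    infer_instance

end FreeGroup

theorem IsFreeGroup.isCyclic_of_mem_center {G : Type*} [Group G] [IsFreeGroup G] {z : G}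
    (hz : z ≠ 1) (hzc : z ∈ center G) : IsCyclic G := by
  let e := IsFreeGroup.toFreeGroup G
  have : Subsingleton (IsFreeGroup.Generators G) :=
    FreeGroup.subsingleton_of_forall_commute_of_ne_one (z := e z) (by simpa using hz)
      fun c => by simpa using Commute.map (mem_center_iff.mp hzc (e.symm (.of c))) e
  have := FreeGroup.isCyclic_of_subsingleton (β := IsFreeGroup.Generators G)
  exact isCyclic_of_surjective e.symm e.symm.surjective

theorem isInfiniteCyclic_of_le_centralizer {α : Type*} {K : Subgroup (FreeGroup α)}
    {k : FreeGroup α} (hk : k ≠ 1) (hkK : k ∈ K) (hK : K ≤ centralizer {k}) :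
    IsInfiniteCyclic K := by
  have : IsCyclic K := IsFreeGroup.isCyclic_of_mem_center (z := ⟨k, hkK⟩)
    (by simpa [Subtype.ext_iff] using hk)
    (mem_center_iff.mpr fun g => Subtype.ext (mem_centralizer_singleton_iff.mp (hK g.2)))
  obtain ⟨g, hg⟩ := isCyclic_iff_exists_zpowers_eq_top.mp this
  have hK_eq : K = closure {(g : FreeGroup α)} := by
    rw [← zpowers_eq_closure, ← K.subtype_apply, ← MonoidHom.map_zpowers, hg,
      ← MonoidHom.range_eq_map, range_subtype]
  refine ⟨g, not_isOfFinOrder_of_isMulTorsionFree fun hg1 => hk ?_, hK_eq⟩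
  have : k ∈ closure {(g : FreeGroup α)} := hK_eq ▸ hkK
  simpa [hg1, closure_singleton_one] using this

theorem IsInfiniteCyclic.le_centralizer {G : Type*} [Group G] {M : Subgroup G}
    (hM : IsInfiniteCyclic M) : M ≤ centralizer M := by
  obtain ⟨x, -, rfl⟩ := hM
  rw [centralizer_closure, closure_le, Set.singleton_subset_iff, SetLike.mem_coe]
  exact mem_centralizer_singleton_iff.mpr rfl

/-- For every nontrivial commutative subgroup `H` of a free group there is a unique
subgroup `M` which is infinite cyclic, contains `H`, and is maximal among infinite
cyclic subgroups. -/
theorem freeGroup_unique_maximal_infinite_cyclic {α : Type*}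
    (H : Subgroup (FreeGroup α)) (hne : ∃ x ∈ H, x ≠ 1)
    (hcomm : ∀ x ∈ H, ∀ y ∈ H, x * y = y * x) :
    ∃! M : Subgroup (FreeGroup α), IsInfiniteCyclic M ∧ H ≤ M ∧
      ∀ N : Subgroup (FreeGroup α), IsInfiniteCyclic N → M ≤ N → N = M := by
  obtain ⟨h, hhH, hh⟩ := hne
  have hhC : h ∈ centralizer {h} := mem_centralizer_singleton_iff.mpr rfl
  have hC : IsInfiniteCyclic (centralizer {h}) :=
    isInfiniteCyclic_of_le_centralizer hh hhC le_rfl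
  have hHC : H ≤ centralizer {h} := fun x hx =>
    mem_centralizer_singleton_iff.mpr (hcomm x hx h hhH)
  have le_C : ∀ N : Subgroup (FreeGroup α), IsInfiniteCyclic N → h ∈ N → N ≤ centralizer {h} :=
    fun N hN hhN => hN.le_centralizer.trans (centralizer_le (Set.singleton_subset_iff.mpr hhN))
  refine ⟨centralizer {h}, ⟨hC, hHC, fun N hN hCN => le_antisymm (le_C N hN (hCN hhC)) hCN⟩, ?_⟩
  rintro M ⟨hM, hHM, hM_max⟩
  exact (hM_max _ hC (le_C M hM (hHM hhH))).symm
end
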